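/- arXiv:1108.1324 — 2 statements merged into one kernel-verified Lean document; each statement's English description precedes it below -/
import Mathlib

section
/- Let (X,d,μ) be a metric measure space with μ Borel regular, and suppose every (N₀+1)-tuple of real-valued Lipschitz functions on X is dependent to first order at μ-almost every point. Then for every measurable set A ⊆ X with μ(A) > 0 there exist a measurable set V ⊆ A with μ(V) > 0, an integer N with 0 ≤ N ≤ N₀, and an N-tuple x = (x¹,…,x^N) of real-valued Lipschitz functions on X such that: for every Lipschitz function f : X → ℝ there exists a measurable function df : V → ℝ^N with Lip_x( f(·) − df(x)·x(·) ) = 0 for μ-a.e. x ∈ V, and df is unique up to μ-null sets (any two such functions agree μ-a.e. on V). -/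
/-!
Choose `N ≤ N₀` maximal such that some Lipschitz `N`-tuple `xs` is independent to first order at
every point of a positive-measure set `V ⊆ A`; the hypothesis rules out `N₀ + 1`, and the empty
tuple works for `N = 0`. By maximality, for every Lipschitz `f` the tuple `(xs, f)` is dependent
at almost every point of `V`, and as `xs` is independent the coefficient of `f` is nonzero:
solving for `f` gives `df x`. At an independent point `c ↦ Lip_x (c · xs)` is a norm on `ℝ^N`, so
`Lip_x (f - c · xs)` grows linearly in `‖c - df x‖`. This gives uniqueness, and makes `df x` the
limit of measurable near-minimizers chosen along a dense sequence, hence measurable.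
-/

open Metric MeasureTheory Filter Set
open scoped NNReal ENNReal

/-- The variation of `f` on the ball `B(x,r)`: `sup { |f y - f x| / r : y ∈ B(x,r) }`. -/
noncomputable def varBall {X : Type*} [MetricSpace X] (f : X → ℝ) (x : X) (r : ℝ) : ℝ :=
  sSup ((fun y => |f y - f x| / r) '' Metric.ball x r)

/-- Lower pointwise Lipschitz constant `lip_x f`. -/
noncomputable def lipLow {X : Type*} [MetricSpace X] (f : X → ℝ) (x : X) : ℝ :=
  Filter.liminf (fun r => varBall f x r) (nhdsWithin 0 (Set.Ioi (0:ℝ)))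

/-- Upper pointwise Lipschitz constant `Lip_x f`. -/
noncomputable def lipUp {X : Type*} [MetricSpace X] (f : X → ℝ) (x : X) : ℝ :=
  Filter.limsup (fun r => varBall f x r) (nhdsWithin 0 (Set.Ioi (0:ℝ)))

/-- `f` is a real-valued Lipschitz function. -/
def IsLip {X : Type*} [MetricSpace X] (f : X → ℝ) : Prop := ∃ K : ℝ≥0, LipschitzWith K f

/-- `μ` is doubling with constant `C`. -/
def DoublingWith {X : Type*} [MetricSpace X] [MeasurableSpace X] (μ : Measure X) (C : ℝ≥0) :
    Prop :=
  ∀ (x : X) (r : ℝ), 0 < r → μ (Metric.ball x (2 * r)) ≤ (C : ℝ≥0∞) * μ (Metric.ball x r)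

/-- `(X, μ)` admits a `p`-Poincaré inequality with constant `L`. -/
def PoincareIneq {X : Type*} [MetricSpace X] [MeasurableSpace X] (μ : Measure X) (p L : ℝ) :
    Prop :=
  (∀ (x : X) (r : ℝ), 0 < r → 0 < μ (Metric.ball x r) ∧ μ (Metric.ball x r) < ⊤) ∧
  ∀ f : X → ℝ, IsLip f → ∀ (x : X) (r : ℝ), 0 < r →
    ⨍ y in Metric.ball x r, |f y - ⨍ z in Metric.ball x r, f z ∂μ| ∂μ ≤
      L * r * (⨍ z in Metric.ball x (L * r), (lipLow f z) ^ p ∂μ) ^ (1 / p)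

/-- An `N`-tuple of functions is dependent to first order at `x`. -/
def DependentAt {X : Type*} [MetricSpace X] {N : ℕ} (f : Fin N → X → ℝ) (x : X) : Prop :=
  ∃ l : Fin N → ℝ, l ≠ 0 ∧ lipUp (fun y => ∑ i, l i * f i y) x = 0

/-- A measurable differentiable structure of dimension at most `N₀`. -/
def HasMDS {X : Type*} [MetricSpace X] [MeasurableSpace X] (μ : Measure X) (N₀ : ℕ) : Prop :=
  ∃ (ι : Type) (_ : Countable ι) (U : ι → Set X) (N : ι → ℕ)
      (φ : (i : ι) → Fin (N i) → X → ℝ),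
    (∀ i, MeasurableSet (U i) ∧ 0 < μ (U i)) ∧
    μ (Set.univ \ ⋃ i, U i) = 0 ∧
    (∀ i, N i ≤ N₀) ∧
    (∀ i k, IsLip (φ i k)) ∧
    (∀ f : X → ℝ, IsLip f → ∀ i, ∃ df : X → (Fin (N i) → ℝ),
      Measurable df ∧
      (∀ᵐ x ∂(μ.restrict (U i)),
        lipUp (fun y => f y - ∑ k, df x k * φ i k y) x = 0) ∧
      ∀ dg : X → (Fin (N i) → ℝ), Measurable dg →
        (∀ᵐ x ∂(μ.restrict (U i)),
          lipUp (fun y => f y - ∑ k, dg x k * φ i k y) x = 0) →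
        (∀ᵐ x ∂(μ.restrict (U i)), df x = dg x))

open scoped Topology

namespace IsLip

variable {X : Type*} [MetricSpace X] {f g : X → ℝ}

lemma add (hf : IsLip f) (hg : IsLip g) : IsLip fun y => f y + g y :=
  let ⟨_, hK⟩ := hf; let ⟨_, hL⟩ := hg; ⟨_, hK.add hL⟩

lemma sub (hf : IsLip f) (hg : IsLip g) : IsLip fun y => f y - g y :=
  let ⟨_, hK⟩ := hf; let ⟨_, hL⟩ := hg; ⟨_, hK.sub hL⟩

lemma const_mul (hf : IsLip f) (c : ℝ) : IsLip fun y => c * f y :=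
  let ⟨_, hK⟩ := hf; ⟨_, (lipschitzWith_smul c).comp hK⟩

lemma sum {ι : Type*} (s : Finset ι) {F : ι → X → ℝ} (hF : ∀ i, IsLip (F i)) :
    IsLip fun y => ∑ i ∈ s, F i y := by
  classical
  induction s using Finset.induction_on with
  | empty => exact ⟨0, by simp⟩
  | insert i s hi ih => simpa only [Finset.sum_insert hi] using (hF i).add ih

lemma linComb {n : ℕ} {h : Fin n → X → ℝ} (hh : ∀ i, IsLip (h i)) (c : Fin n → ℝ) :
    IsLip fun y => ∑ i, c i * h i y :=
  sum _ fun i => (hh i).const_mul (c i)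

end IsLip

section VarBall

variable {X : Type*} [MetricSpace X] {g h : X → ℝ} {K L : ℝ≥0} {x y : X} {r : ℝ}

lemma LipschitzWith.abs_sub_div_le (hg : LipschitzWith K g) (hr : 0 < r) (hy : y ∈ ball x r) :
    |g y - g x| / r ≤ K := by
  rw [div_le_iff₀ hr, ← Real.dist_eq]
  exact hg.dist_le_mul_of_le (mem_ball.1 hy).le

lemma LipschitzWith.le_varBall (hg : LipschitzWith K g) (hr : 0 < r) (hy : y ∈ ball x r) :
    |g y - g x| / r ≤ varBall g x r :=
  le_csSup ⟨K, by rintro _ ⟨z, hz, rfl⟩; exact hg.abs_sub_div_le hr hz⟩ ⟨y, hy, rfl⟩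

lemma LipschitzWith.varBall_nonneg (hg : LipschitzWith K g) (hr : 0 < r) : 0 ≤ varBall g x r := by
  simpa using hg.le_varBall (x := x) hr (mem_ball_self hr)

lemma LipschitzWith.varBall_le (hg : LipschitzWith K g) (hr : 0 < r) : varBall g x r ≤ K :=
  csSup_le ((nonempty_ball.2 hr).image _) fun _ ⟨_, hz, hv⟩ => hv ▸ hg.abs_sub_div_le hr hz

lemma varBall_const_mul (c : ℝ) (g : X → ℝ) (x : X) (r : ℝ) :
    varBall (fun y => c * g y) x r = |c| * varBall g x r := by
  rw [varBall, varBall, ← smul_eq_mul (a := |c|), ← Real.sSup_smul_of_nonneg (abs_nonneg c),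
    ← Set.image_smul, Set.image_image]
  congr! 2 with y
  rw [smul_eq_mul, ← mul_sub, abs_mul, mul_div_assoc]

lemma LipschitzWith.varBall_add_le (hg : LipschitzWith K g) (hh : LipschitzWith L h) (hr : 0 < r) :
    varBall (fun y => g y + h y) x r ≤ varBall g x r + varBall h x r := by
  refine csSup_le ((nonempty_ball.2 hr).image _) ?_
  rintro _ ⟨y, hy, rfl⟩
  calc |g y + h y - (g x + h x)| / r ≤ |g y - g x| / r + |h y - h x| / r := by
        rw [← add_div, add_sub_add_comm]
        gcongr
        exact abs_add_le _ _
    _ ≤ varBall g x r + varBall h x r := add_le_add (hg.le_varBall hr hy) (hh.le_varBall hr hy)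

end VarBall

section LipUp

variable {X : Type*} [MetricSpace X] {g h : X → ℝ}

namespace IsLip

lemma eventually_varBall_nonneg (hg : IsLip g) (x : X) : ∀ᶠ r in 𝓝[>] 0, 0 ≤ varBall g x r :=
  let ⟨_, hK⟩ := hg; eventually_nhdsWithin_of_forall fun _ hr => hK.varBall_nonneg hr

lemma isBoundedUnder_le_varBall (hg : IsLip g) (x : X) :
    IsBoundedUnder (· ≤ ·) (𝓝[>] 0) (varBall g x) :=
  let ⟨K, hK⟩ := hg
  isBoundedUnder_of_eventually_le (a := (K : ℝ))
    (eventually_nhdsWithin_of_forall fun _ hr => hK.varBall_le hr)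

lemma isBoundedUnder_ge_varBall (hg : IsLip g) (x : X) :
    IsBoundedUnder (· ≥ ·) (𝓝[>] 0) (varBall g x) :=
  isBoundedUnder_of_eventually_ge (hg.eventually_varBall_nonneg x)

lemma isCoboundedUnder_le_varBall (hg : IsLip g) (x : X) :
    IsCoboundedUnder (· ≤ ·) (𝓝[>] 0) (varBall g x) :=
  isCoboundedUnder_le_of_eventually_le _ (hg.eventually_varBall_nonneg x)

lemma lipUp_nonneg (hg : IsLip g) (x : X) : 0 ≤ lipUp g x :=
  le_limsup_of_frequently_le (hg.eventually_varBall_nonneg x).frequently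
    (hg.isBoundedUnder_le_varBall x)

lemma lipUp_const_mul (hg : IsLip g) (c : ℝ) (x : X) :
    lipUp (fun y => c * g y) x = |c| * lipUp g x := by
  have hmono : Monotone (|c| * ·) := monotone_mul_left_of_nonneg (abs_nonneg c)
  rw [lipUp, lipUp, hmono.map_limsup_of_continuousAt _ (continuous_const_mul _).continuousAt
    (hg.isBoundedUnder_le_varBall x) (hg.isCoboundedUnder_le_varBall x)]
  simp only [Function.comp_def, varBall_const_mul]

lemma lipUp_add_le (hg : IsLip g) (hh : IsLip h) (x : X) :
    lipUp (fun y => g y + h y) x ≤ lipUp g x + lipUp h x := by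
  have ⟨K, hK⟩ := hg
  have ⟨L, hL⟩ := hh
  calc lipUp (fun y => g y + h y) x ≤ limsup (varBall g x + varBall h x) (𝓝[>] 0) :=
        limsup_le_limsup (eventually_nhdsWithin_of_forall fun _ hr => hK.varBall_add_le hL hr)
          ((hg.add hh).isCoboundedUnder_le_varBall x)
          (isBoundedUnder_le_add (hg.isBoundedUnder_le_varBall x) (hh.isBoundedUnder_le_varBall x))
    _ ≤ lipUp g x + lipUp h x :=
        limsup_add_le (hg.isBoundedUnder_ge_varBall x) (hg.isBoundedUnder_le_varBall x)
          (hh.isCoboundedUnder_le_varBall x) (hh.isBoundedUnder_le_varBall x)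

lemma lipUp_sub_le (hg : IsLip g) (hh : IsLip h) (x : X) :
    lipUp (fun y => g y - h y) x ≤ lipUp g x + lipUp h x := by
  have hneg := hh.lipUp_const_mul (-1) x
  simp only [neg_one_mul, abs_neg, abs_one, one_mul] at hneg
  simpa only [neg_one_mul, ← sub_eq_add_neg, hneg] using hg.lipUp_add_le (hh.const_mul (-1)) x

lemma lipUp_le_add_lipUp_sub (hg : IsLip g) (hh : IsLip h) (x : X) :
    lipUp g x ≤ lipUp h x + lipUp (fun y => g y - h y) x := by
  simpa only [add_sub_cancel] using hh.lipUp_add_le (hg.sub hh) x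

end IsLip

end LipUp

section Measurability

variable {X : Type*} [MetricSpace X] {g : X → ℝ} {K : ℝ≥0} {x : X} {r : ℝ}

lemma LipschitzWith.lowerSemicontinuous_varBall (hg : LipschitzWith K g) (hr : 0 < r) :
    LowerSemicontinuous (varBall g · r) := by
  intro x v hv
  obtain ⟨_, ⟨y, hy, rfl⟩, hvy⟩ := exists_lt_of_lt_csSup ((nonempty_ball.2 hr).image _) hv
  have hopen : IsOpen {x' | dist y x' < r ∧ v < |g y - g x'| / r} :=
    (isOpen_lt (continuous_const.dist continuous_id) continuous_const).inter
      (isOpen_lt continuous_const ((continuous_const.sub hg.continuous).abs.div_const r))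
  filter_upwards [hopen.mem_nhds ⟨mem_ball.1 hy, hvy⟩] with x' hx'
  exact hx'.2.trans_le (hg.le_varBall hr (mem_ball.2 hx'.1))

lemma LipschitzWith.varBall_le_iSup_rat (hg : LipschitzWith K g) {ε : ℝ} (hr : r ∈ Ioo 0 ε) :
    varBall g x r ≤ ⨆ q : {q : ℚ // (q : ℝ) ∈ Ioo 0 ε}, varBall g x q := by
  refine csSup_le ((nonempty_ball.2 hr.1).image _) ?_
  rintro _ ⟨y, hy, rfl⟩
  obtain ⟨q, hyq, hqr⟩ := exists_rat_btwn (mem_ball.1 hy)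
  have hq : 0 < (q : ℝ) := dist_nonneg.trans_lt hyq
  calc |g y - g x| / r ≤ |g y - g x| / q := by gcongr
    _ ≤ varBall g x q := hg.le_varBall hq (mem_ball.2 hyq)
    _ ≤ _ := le_ciSup (f := fun q : {q : ℚ // (q : ℝ) ∈ Ioo 0 ε} => varBall g x q)
          ⟨K, by rintro _ ⟨q, rfl⟩; exact hg.varBall_le q.2.1⟩ ⟨q, hq, hqr.trans hr.2⟩

lemma IsLip.lipUp_eq_iInf_iSup_rat (hg : IsLip g) (x : X) :
    lipUp g x = ⨅ n : ℕ, ⨆ q : {q : ℚ // (q : ℝ) ∈ Ioo 0 (1 / ((n : ℝ) + 1))}, varBall g x q := by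
  have ⟨K, hK⟩ := hg
  have hsup_nonneg (n : ℕ) :
      0 ≤ ⨆ q : {q : ℚ // (q : ℝ) ∈ Ioo 0 (1 / ((n : ℝ) + 1))}, varBall g x q :=
    Real.iSup_nonneg fun q => hK.varBall_nonneg q.2.1
  apply le_antisymm
  · refine le_ciInf fun n => limsup_le_of_le (hg.isCoboundedUnder_le_varBall x) ?_
    filter_upwards [Ioo_mem_nhdsGT (by positivity : (0 : ℝ) < 1 / (n + 1))] with r hr
    exact hK.varBall_le_iSup_rat hr
  · refine le_of_forall_pos_le_add fun ε hε => ?_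
    have hev : ∀ᶠ r in 𝓝[>] 0, varBall g x r < lipUp g x + ε :=
      eventually_lt_of_limsup_lt (lt_add_of_pos_right _ hε) (hg.isBoundedUnder_le_varBall x)
    obtain ⟨δ, hδ, hδsub⟩ := mem_nhdsGT_iff_exists_Ioo_subset.1 hev
    obtain ⟨n, hn⟩ := exists_nat_one_div_lt (mem_Ioi.1 hδ)
    refine ciInf_le_of_le ⟨0, by rintro _ ⟨m, rfl⟩; exact hsup_nonneg m⟩ n
      (Real.iSup_le (fun q => (hδsub ⟨q.2.1, q.2.2.trans hn⟩).le) ?_)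
    linarith [hg.lipUp_nonneg x]

variable [MeasurableSpace X] [OpensMeasurableSpace X]

lemma IsLip.measurable_lipUp (hg : IsLip g) : Measurable (lipUp g) := by
  rw [funext hg.lipUp_eq_iInf_iSup_rat]
  obtain ⟨K, hK⟩ := hg
  exact .iInf fun n => .iSup fun q => (hK.lowerSemicontinuous_varBall q.2.1).measurable

end Measurability

namespace Seminorm

variable {ι : Type*} [Fintype ι]

lemma le_sum_mul_norm [DecidableEq ι] (p : Seminorm ℝ (ι → ℝ)) (v : ι → ℝ) :
    p v ≤ (∑ i, p (Pi.single i 1)) * ‖v‖ := by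
  calc p v = p (∑ i, v i • Pi.single i 1) := by
        congr 1; ext j; simp [Finset.sum_apply, Pi.single_apply]
    _ ≤ ∑ i, p (v i • Pi.single i 1) :=
        Finset.le_sum_of_subadditive p (map_zero p).le (map_add_le_add p) _ _
    _ = ∑ i, ‖v i‖ * p (Pi.single i 1) := by simp only [map_smul_eq_mul]
    _ ≤ ∑ i, ‖v‖ * p (Pi.single i 1) := by
        gcongr with i; exact norm_le_pi_norm v i
    _ = (∑ i, p (Pi.single i 1)) * ‖v‖ := by rw [mul_comm, Finset.mul_sum]

lemma continuous_of_abs_sub_le (p : Seminorm ℝ (ι → ℝ)) {F : (ι → ℝ) → ℝ}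
    (hF : ∀ a b, |F a - F b| ≤ p (a - b)) : Continuous F := by
  classical
  refine (LipschitzWith.of_dist_le' (K := ∑ i, p (Pi.single i 1)) fun a b => ?_).continuous
  rw [Real.dist_eq, dist_eq_norm]
  exact (hF a b).trans (p.le_sum_mul_norm _)

lemma continuous_of_fintype (p : Seminorm ℝ (ι → ℝ)) : Continuous p :=
  p.continuous_of_abs_sub_le (abs_sub_map_le_sub p)

variable {E : Type*} [NormedAddCommGroup E] [NormedSpace ℝ E]

lemma exists_ne_zero_eq_zero_iff (p : Seminorm ℝ E) :
    (∃ v ≠ 0, p v = 0) ↔ ∃ v ∈ sphere (0 : E) 1, p v ≤ 0 := by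
  constructor
  · rintro ⟨v, hv, hpv⟩
    refine ⟨‖v‖⁻¹ • v, by simp [norm_smul, hv], ?_⟩
    rw [map_smul_eq_mul, hpv, mul_zero]
  · rintro ⟨v, hv, hpv⟩
    exact ⟨v, ne_zero_of_mem_unit_sphere ⟨v, hv⟩, hpv.antisymm (apply_nonneg p v)⟩

lemma exists_pos_mul_norm_le [ProperSpace E] (p : Seminorm ℝ E) (hp : Continuous p)
    (hker : ∀ v, p v = 0 → v = 0) : ∃ δ > 0, ∀ v, δ * ‖v‖ ≤ p v := by
  rcases subsingleton_or_nontrivial E with hE | hE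
  · exact ⟨1, one_pos, fun v => by simp [Subsingleton.elim v 0]⟩
  obtain ⟨u, hu, hmin⟩ := (isCompact_sphere (0 : E) 1).exists_isMinOn
    (NormedSpace.sphere_nonempty.2 zero_le_one) hp.continuousOn
  have hu0 : u ≠ 0 := ne_zero_of_mem_unit_sphere ⟨u, hu⟩
  refine ⟨p u, (apply_nonneg p u).lt_of_ne' (mt (hker u) hu0), fun v => ?_⟩
  rcases eq_or_ne v 0 with rfl | hv
  · simp
  have hvu : ‖v‖⁻¹ • v ∈ sphere (0 : E) 1 := by simp [norm_smul, hv]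
  calc p u * ‖v‖ ≤ p (‖v‖⁻¹ • v) * ‖v‖ := by gcongr; exact hmin hvu
    _ = p v := by
        rw [map_smul_eq_mul, norm_inv, norm_norm, mul_comm, ← mul_assoc,
          mul_inv_cancel₀ (norm_ne_zero_iff.2 hv), one_mul]

end Seminorm

section MeasurableSelection

variable {X E : Type*} [MeasurableSpace X] [MetricSpace E] {Φ : X → E → ℝ}

lemma IsCompact.measurableSet_exists_apply_nonpos (hΦm : ∀ c, Measurable (Φ · c))
    (hΦc : ∀ x, Continuous (Φ x)) {K : Set E} (hK : IsCompact K) :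
    MeasurableSet {x | ∃ c ∈ K, Φ x c ≤ 0} := by
  obtain ⟨t, htK, htc, hKt⟩ := hK.isSeparable.exists_countable_dense_subset
  have hset : {x | ∃ c ∈ K, Φ x c ≤ 0} = ⋂ m : ℕ, ⋃ q ∈ t, {x | Φ x q < 1 / (m + 1)} := by
    ext x
    simp only [mem_iInter, mem_iUnion, exists_prop]
    constructor
    · rintro ⟨c, hcK, hc⟩ m
      obtain ⟨q, hq, hqt⟩ := mem_closure_iff.1 (hKt hcK) _
        (isOpen_lt (hΦc x) continuous_const) (hc.trans_lt (by positivity : (0 : ℝ) < 1 / (m + 1)))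
      exact ⟨q, hqt, hq⟩
    · intro hx
      choose q hqt hq using hx
      obtain ⟨c, hcK, φ, hφ, hlim⟩ := hK.tendsto_subseq fun m => htK (hqt m)
      exact ⟨c, hcK, le_of_tendsto_of_tendsto' ((hΦc x).tendsto c |>.comp hlim)
        (tendsto_one_div_add_atTop_nhds_zero_nat.comp hφ.tendsto_atTop) fun m => (hq (φ m)).le⟩
  rw [hset]
  exact .iInter fun m => .biUnion htc fun q _ => measurableSet_lt (hΦm q) measurable_const

/-- The selected zero is the limit of the first terms of a dense sequence at which
`Φ x < 1 / (m + 1)`. -/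
lemma exists_measurable_eq_of_mul_dist_le [CompleteSpace E] [TopologicalSpace.SeparableSpace E]
    [Nonempty E] [MeasurableSpace E] [BorelSpace E] (hΦm : ∀ c, Measurable (Φ · c))
    (hΦc : ∀ x, Continuous (Φ x)) :
    ∃ s : X → E, Measurable s ∧
      ∀ x z δ, 0 < δ → Φ x z = 0 → (∀ c, δ * dist c z ≤ Φ x c) → s x = z := by
  classical
  obtain ⟨u, hu⟩ := TopologicalSpace.exists_dense_seq E
  let P (m j : ℕ) (x : X) : Prop := Φ x (u j) < 1 / (m + 1) ∨ ∀ i, 1 / (m + 1) ≤ Φ x (u i)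
  have hP (m : ℕ) (x : X) : ∃ j, P m j x := by
    by_cases h : ∃ j, Φ x (u j) < 1 / (m + 1)
    · exact h.imp fun _ => .inl
    · exact ⟨0, .inr fun i => not_lt.1 fun hi => h ⟨i, hi⟩⟩
  have hPm (m j : ℕ) : MeasurableSet {x | P m j x} := by
    simp only [P, ofPred_or, ofPred_forall]
    exact (measurableSet_lt (hΦm _) measurable_const).union
      (.iInter fun i => measurableSet_le measurable_const (hΦm _))
  let s (m : ℕ) (x : X) : E := u (Nat.find (hP m x))
  have hs (m : ℕ) : Measurable (s m) := Measurable.find (fun _ => measurable_const) (hPm m) (hP m)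
  refine ⟨fun x => limUnder atTop (s · x),
    (StronglyMeasurable.limUnder fun m => (hs m).stronglyMeasurable).measurable, ?_⟩
  intro x z δ hδ hz hgrowth
  have hsmall (m : ℕ) : Φ x (s m x) < 1 / (m + 1) := by
    obtain ⟨j, hj⟩ := hu.exists_mem_open (isOpen_lt (hΦc x) continuous_const)
      ⟨z, show Φ x z < 1 / (m + 1) by rw [hz]; positivity⟩
    exact (Nat.find_spec (hP m x)).resolve_right fun h => (h j).not_gt hj
  refine Tendsto.limUnder_eq ((tendsto_iff_dist_tendsto_zero).2 <| squeeze_zero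
    (fun _ => dist_nonneg) (fun m => (le_div_iff₀' hδ).2 ((hgrowth _).trans (hsmall m).le)) ?_)
  simpa using tendsto_one_div_add_atTop_nhds_zero_nat.div_const δ

end MeasurableSelection

section LipUpSeminorm

variable {X : Type*} [MetricSpace X] {n : ℕ} {h : Fin n → X → ℝ}

/-- `h` is dependent to first order at `x` iff this seminorm has a nontrivial kernel. -/
noncomputable def lipUpSeminorm (hh : ∀ i, IsLip (h i)) (x : X) : Seminorm ℝ (Fin n → ℝ) :=
  Seminorm.of (fun c => lipUp (fun y => ∑ i, c i * h i y) x)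
    (fun a b => by
      simpa only [Pi.add_apply, add_mul, Finset.sum_add_distrib] using
        (IsLip.linComb hh a).lipUp_add_le (IsLip.linComb hh b) x)
    (fun a c => by
      simpa only [Pi.smul_apply, smul_eq_mul, mul_assoc, ← Finset.mul_sum, Real.norm_eq_abs] using
        (IsLip.linComb hh c).lipUp_const_mul a x)

lemma lipUpSeminorm_apply (hh : ∀ i, IsLip (h i)) (x : X) (c : Fin n → ℝ) :
    lipUpSeminorm hh x c = lipUp (fun y => ∑ i, c i * h i y) x := rfl

lemma measurableSet_dependentAt [MeasurableSpace X] [OpensMeasurableSpace X]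
    (hh : ∀ i, IsLip (h i)) : MeasurableSet {x | DependentAt h x} := by
  have hset : {x | DependentAt h x} = {x | ∃ c ∈ sphere 0 1, lipUpSeminorm hh x c ≤ 0} := by
    ext x
    exact (lipUpSeminorm hh x).exists_ne_zero_eq_zero_iff
  rw [hset]
  exact (isCompact_sphere 0 1).measurableSet_exists_apply_nonpos
    (fun c => (IsLip.linComb hh c).measurable_lipUp)
    fun x => (lipUpSeminorm hh x).continuous_of_fintype

end LipUpSeminorm

section Differential

variable {X : Type*} [MetricSpace X] {N : ℕ} {xs : Fin N → X → ℝ} {f : X → ℝ} {x : X}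

lemma lipUpSeminorm_sub_le (hxs : ∀ k, IsLip (xs k)) (hf : IsLip f) (c c' : Fin N → ℝ) :
    lipUpSeminorm hxs x (c - c') ≤
      lipUp (fun y => f y - ∑ k, c k * xs k y) x + lipUp (fun y => f y - ∑ k, c' k * xs k y) x := by
  rw [add_comm, lipUpSeminorm_apply]
  convert (hf.sub (IsLip.linComb hxs c')).lipUp_sub_le (hf.sub (IsLip.linComb hxs c)) x using 3
  simp only [Pi.sub_apply, sub_mul, Finset.sum_sub_distrib]
  ring

lemma abs_lipUp_sub_sub_le (hxs : ∀ k, IsLip (xs k)) (hf : IsLip f) (c c' : Fin N → ℝ) :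
    |lipUp (fun y => f y - ∑ k, c k * xs k y) x - lipUp (fun y => f y - ∑ k, c' k * xs k y) x| ≤
      lipUpSeminorm hxs x (c - c') := by
  have key (a b : Fin N → ℝ) :
      lipUp (fun y => f y - ∑ k, a k * xs k y) x ≤
        lipUp (fun y => f y - ∑ k, b k * xs k y) x + lipUpSeminorm hxs x (b - a) := by
    rw [lipUpSeminorm_apply]
    convert (hf.sub (IsLip.linComb hxs a)).lipUp_le_add_lipUp_sub (hf.sub (IsLip.linComb hxs b)) x
      using 3
    ext y
    simp only [Pi.sub_apply, sub_mul, Finset.sum_sub_distrib]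
    ring
  rw [abs_sub_le_iff]
  constructor
  · linarith [key c c', map_sub_rev (lipUpSeminorm hxs x) c c']
  · linarith [key c' c]

lemma exists_pos_mul_dist_le_lipUp_sub (hxs : ∀ k, IsLip (xs k)) (hf : IsLip f)
    (hind : ¬ DependentAt xs x) {z : Fin N → ℝ}
    (hz : lipUp (fun y => f y - ∑ k, z k * xs k y) x = 0) :
    ∃ δ > 0, ∀ c, δ * dist c z ≤ lipUp (fun y => f y - ∑ k, c k * xs k y) x := by
  obtain ⟨δ, hδ, hle⟩ := (lipUpSeminorm hxs x).exists_pos_mul_norm_le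
    (lipUpSeminorm hxs x).continuous_of_fintype fun v hv => not_not.1 fun hv0 => hind ⟨v, hv0, hv⟩
  refine ⟨δ, hδ, fun c => ?_⟩
  simpa [dist_eq_norm, hz] using (hle (c - z)).trans (lipUpSeminorm_sub_le hxs hf c z)

lemma eq_of_lipUp_sub_eq_zero (hxs : ∀ k, IsLip (xs k)) (hf : IsLip f) (hind : ¬ DependentAt xs x)
    {c c' : Fin N → ℝ} (hc : lipUp (fun y => f y - ∑ k, c k * xs k y) x = 0)
    (hc' : lipUp (fun y => f y - ∑ k, c' k * xs k y) x = 0) : c = c' := by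
  by_contra hne
  refine hind ⟨c - c', sub_ne_zero.2 hne, ?_⟩
  have := lipUpSeminorm_sub_le hxs hf c c' (x := x)
  rw [hc, hc', add_zero] at this
  exact this.antisymm (apply_nonneg _ _)

/-- Independence of `xs` forces a nonzero coefficient on `f` in the dependence relation of
`(xs, f)`; solving for `f` gives the differential. -/
lemma exists_lipUp_sub_eq_zero_of_dependentAt_snoc (hxs : ∀ k, IsLip (xs k)) (hf : IsLip f)
    (hind : ¬ DependentAt xs x)
    (hdep : DependentAt (Fin.snoc xs f : Fin (N + 1) → X → ℝ) x) :
    ∃ z : Fin N → ℝ, lipUp (fun y => f y - ∑ k, z k * xs k y) x = 0 := by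
  obtain ⟨l, hl0, hl⟩ := hdep
  set a := l (Fin.last N)
  have hsum (y : X) : ∑ i, l i * (Fin.snoc xs f : Fin (N + 1) → X → ℝ) i y =
      ∑ k, Fin.init l k * xs k y + a * f y := by
    simp [Fin.sum_univ_castSucc, Fin.init, a]
  simp only [hsum] at hl
  have ha : a ≠ 0 := by
    intro ha
    refine hind ⟨Fin.init l, fun hinit => hl0 ?_, by simpa [ha] using hl⟩
    ext i
    induction i using Fin.lastCases with
    | last => exact ha
    | cast k => exact congrFun hinit k
  refine ⟨-a⁻¹ • Fin.init l, ?_⟩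
  have hfun : (fun y => f y - ∑ k, (-a⁻¹ • Fin.init l) k * xs k y) =
      fun y => a⁻¹ * (∑ k, Fin.init l k * xs k y + a * f y) := by
    funext y
    simp only [Pi.smul_apply, smul_eq_mul, neg_mul, mul_assoc, Finset.sum_neg_distrib,
      ← Finset.mul_sum]
    field_simp
    ring
  rw [hfun, ((IsLip.linComb hxs _).add (hf.const_mul a)).lipUp_const_mul, hl, mul_zero]

end Differential

section CoordinatePatch

variable {X : Type*} [MetricSpace X] [MeasurableSpace X]

def HasIndependentTuple (μ : Measure X) (A : Set X) (n : ℕ) : Prop :=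
  ∃ xs : Fin n → X → ℝ, (∀ k, IsLip (xs k)) ∧
    ∃ V ⊆ A, MeasurableSet V ∧ 0 < μ V ∧ ∀ x ∈ V, ¬ DependentAt xs x

variable {μ : Measure X} {A : Set X}

lemma hasIndependentTuple_zero (hA : MeasurableSet A) (hApos : 0 < μ A) :
    HasIndependentTuple μ A 0 :=
  ⟨Fin.elim0, Fin.rec0, A, subset_rfl, hA, hApos,
    fun _ _ ⟨l, hl0, _⟩ => hl0 (Subsingleton.elim l 0)⟩

lemma not_hasIndependentTuple_of_ae_dependentAt {n : ℕ}
    (hdep : ∀ f : Fin n → X → ℝ, (∀ i, IsLip (f i)) → ∀ᵐ x ∂μ, DependentAt f x) :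
    ¬ HasIndependentTuple μ A n := fun ⟨xs, hxs, _, _, _, hVpos, hind⟩ =>
  hVpos.ne' (measure_mono_null hind (ae_iff.1 (hdep xs hxs)))

lemma ae_dependentAt_snoc_of_not_hasIndependentTuple [OpensMeasurableSpace X] {N : ℕ}
    (hmax : ¬ HasIndependentTuple μ A (N + 1)) {xs : Fin N → X → ℝ} (hxs : ∀ k, IsLip (xs k))
    {V : Set X} (hVA : V ⊆ A) (hV : MeasurableSet V) {f : X → ℝ} (hf : IsLip f) :
    ∀ᵐ x ∂μ.restrict V, DependentAt (Fin.snoc xs f : Fin (N + 1) → X → ℝ) x := by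
  have hsnoc (i : Fin (N + 1)) : IsLip ((Fin.snoc xs f : Fin (N + 1) → X → ℝ) i) := by
    induction i using Fin.lastCases with
    | last => simpa using hf
    | cast k => simpa using hxs k
  by_contra hae
  refine hmax ⟨_, hsnoc, V \ {x | DependentAt _ x}, sdiff_subset.trans hVA,
    hV.diff (measurableSet_dependentAt hsnoc), pos_iff_ne_zero.2 fun h0 => hae ?_,
    fun x hx => hx.2⟩
  rw [ae_restrict_iff' hV, ae_iff]
  simp only [Classical.not_imp]
  exact h0

end CoordinatePatch

/-- Lemma 4.3 / Lemma `lem-decomp`: under finite dimensionality of the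
differentials, every positive measure set contains a positive measure coordinate patch. -/
theorem exists_coordinate_patch_in_positive_measure_set
    (X : Type*) [MetricSpace X] [MeasurableSpace X] [BorelSpace X]
    (μ : Measure X) (N₀ : ℕ)
    (hdim : ∀ f : Fin (N₀ + 1) → X → ℝ, (∀ i, IsLip (f i)) →
      ∀ᵐ x ∂μ, DependentAt f x)
    (A : Set X) (hA : MeasurableSet A) (hApos : 0 < μ A) :
    ∃ (V : Set X) (N : ℕ) (xs : Fin N → X → ℝ),
      V ⊆ A ∧ MeasurableSet V ∧ 0 < μ V ∧ N ≤ N₀ ∧ (∀ k, IsLip (xs k)) ∧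
      ∀ f : X → ℝ, IsLip f →
        (∃ df : X → (Fin N → ℝ), Measurable df ∧
          (∀ᵐ x ∂(μ.restrict V), lipUp (fun y => f y - ∑ k, df x k * xs k y) x = 0)) ∧
        (∀ df dg : X → (Fin N → ℝ), Measurable df → Measurable dg →
          (∀ᵐ x ∂(μ.restrict V), lipUp (fun y => f y - ∑ k, df x k * xs k y) x = 0) →
          (∀ᵐ x ∂(μ.restrict V), lipUp (fun y => f y - ∑ k, dg x k * xs k y) x = 0) →
          (∀ᵐ x ∂(μ.restrict V), df x = dg x)) := by
  classical
  set N := Nat.findGreatest (HasIndependentTuple μ A) N₀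
  have hN : N ≤ N₀ := Nat.findGreatest_le N₀
  obtain ⟨xs, hxs, V, hVA, hV, hVpos, hind⟩ : HasIndependentTuple μ A N :=
    Nat.findGreatest_spec (Nat.zero_le N₀) (hasIndependentTuple_zero hA hApos)
  have hmax : ¬ HasIndependentTuple μ A (N + 1) := by
    rcases hN.lt_or_eq with hlt | heq
    · exact Nat.findGreatest_is_greatest (lt_add_one N) hlt
    · exact heq ▸ not_hasIndependentTuple_of_ae_dependentAt hdim
  refine ⟨V, N, xs, hVA, hV, hVpos, hN, hxs, fun f hf => ⟨?_, ?_⟩⟩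
  · have hmeas : ∀ c : Fin N → ℝ, Measurable fun x => lipUp (fun y => f y - ∑ k, c k * xs k y) x :=
      fun c => (hf.sub (IsLip.linComb hxs c)).measurable_lipUp
    have hcont : ∀ x, Continuous fun c : Fin N → ℝ => lipUp (fun y => f y - ∑ k, c k * xs k y) x :=
      fun x => (lipUpSeminorm hxs x).continuous_of_abs_sub_le (abs_lipUp_sub_sub_le hxs hf)
    obtain ⟨df, hdf, hdf_eq⟩ := exists_measurable_eq_of_mul_dist_le hmeas hcont
    refine ⟨df, hdf, ?_⟩
    filter_upwards [ae_dependentAt_snoc_of_not_hasIndependentTuple hmax hxs hVA hV hf,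
      ae_restrict_mem hV] with x hdep hxV
    obtain ⟨z, hz⟩ := exists_lipUp_sub_eq_zero_of_dependentAt_snoc hxs hf (hind x hxV) hdep
    obtain ⟨δ, hδ, hgrowth⟩ := exists_pos_mul_dist_le_lipUp_sub hxs hf (hind x hxV) hz
    rwa [hdf_eq x z δ hδ hz hgrowth]
  · intro df dg _ _ hdf hdg
    filter_upwards [hdf, hdg, ae_restrict_mem hV] with x hx hx' hxV
    exact eq_of_lipUp_sub_eq_zero hxs hf (hind x hxV) hx hx'
end

section
/- Let X be a metric space equipped with its Borel σ-algebra and let f : X → ℝ be Lipschitz. Then the functions x ↦ lip_x f and x ↦ Lip_x f are Borel measurable on X. -/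
open Metric MeasureTheory Filter Set
open scoped NNReal ENNReal

section Aux
variable {X : Type*} [MetricSpace X] {f : X → ℝ} {K : ℝ≥0} (hK : LipschitzWith K f)

lemma varSet_nonempty (x : X) {r : ℝ} (hr : 0 < r) :
    ((fun y => |f y - f x| / r) '' Metric.ball x r).Nonempty :=
  ⟨_, Set.mem_image_of_mem _ (mem_ball_self hr)⟩

include hK in
lemma varSet_bdd (x : X) {r : ℝ} (hr : 0 < r) :
    ∀ a ∈ (fun y => |f y - f x| / r) '' Metric.ball x r, a ≤ K := by
  rintro a ⟨y, hy, rfl⟩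
  rw [div_le_iff₀ hr]
  calc |f y - f x| = dist (f y) (f x) := (Real.dist_eq _ _).symm
    _ ≤ K * dist y x := hK.dist_le_mul y x
    _ ≤ K * r := by
        have := (mem_ball.mp hy).le
        exact mul_le_mul_of_nonneg_left this K.coe_nonneg

include hK in
lemma varBall_le_K (x : X) {r : ℝ} (hr : 0 < r) : varBall f x r ≤ K :=
  csSup_le (varSet_nonempty x hr) (varSet_bdd hK x hr)

include hK in
lemma varBall_nonneg (x : X) {r : ℝ} (hr : 0 < r) : 0 ≤ varBall f x r := by
  have h0 : (0:ℝ) ∈ (fun y => |f y - f x| / r) '' Metric.ball x r :=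
    ⟨x, mem_ball_self hr, by simp⟩
  exact le_csSup ⟨K, varSet_bdd hK x hr⟩ h0

include hK in
lemma le_varBall (x y : X) {r : ℝ} (hy : y ∈ Metric.ball x r) :
    |f y - f x| / r ≤ varBall f x r := by
  have hr : 0 < r := lt_of_le_of_lt dist_nonneg (mem_ball.mp hy)
  exact le_csSup ⟨K, varSet_bdd hK x hr⟩ ⟨y, hy, rfl⟩

include hK in
lemma varBall_le_mul (x : X) {q r : ℝ} (hq : 0 < q) (hqr : q ≤ r) :
    varBall f x q ≤ (r / q) * varBall f x r := by
  have hr : 0 < r := hq.trans_le hqr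
  apply csSup_le (varSet_nonempty x hq)
  rintro a ⟨y, hy, rfl⟩
  have hy' : y ∈ Metric.ball x r := ball_subset_ball hqr hy
  have h1 : |f y - f x| / r ≤ varBall f x r := le_varBall hK x y hy'
  show |f y - f x| / q ≤ _
  have heq : |f y - f x| / q = (r / q) * (|f y - f x| / r) := by
    field_simp
  rw [heq]
  have hrq : 0 ≤ r / q := le_of_lt (div_pos hr hq)
  exact mul_le_mul_of_nonneg_left h1 hrq

include hK in
/-- Left approximation of `varBall` by rational radii. -/
lemma varBall_approx (x : X) {r ε : ℝ} (hr : 0 < r) (hε : 0 < ε) :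
    ∃ q : ℚ, 0 < (q:ℝ) ∧ (q:ℝ) < r ∧ |varBall f x (q:ℝ) - varBall f x r| ≤ ε := by
  set K' : ℝ := max (K:ℝ) 1 with hK'def
  have hK1 : (1:ℝ) ≤ K' := le_max_right _ _
  have hK0 : (0:ℝ) < K' := lt_of_lt_of_le one_pos hK1
  have hgK : varBall f x r ≤ K' := (varBall_le_K hK x hr).trans (le_max_left _ _)
  have hg0 : 0 ≤ varBall f x r := varBall_nonneg hK x hr
  set δ : ℝ := min (r/2) (ε * r / (8*K')) with hδdef
  have hδ0 : 0 < δ := lt_min (by linarith) (by positivity)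
  have hδr2 : δ ≤ r/2 := min_le_left _ _
  have hδε : δ ≤ ε * r / (8*K') := min_le_right _ _
  -- pick y with |f y - f x|/r > varBall f x r - ε/2
  have hlt : varBall f x r - ε/2 < varBall f x r := by linarith
  obtain ⟨a, ⟨y, hy, rfl⟩, hya⟩ := exists_lt_of_lt_csSup (varSet_nonempty x hr) hlt
  have hyr : dist y x < r := mem_ball.mp hy
  have hmax : max (dist y x) (r - δ) < r := max_lt hyr (by linarith)
  obtain ⟨q, hq1, hq2⟩ := exists_rat_btwn hmax
  have hq0 : 0 < (q:ℝ) := by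
    have : r - δ < (q:ℝ) := (le_max_right _ _).trans_lt hq1
    linarith
  have hqy : dist y x < (q:ℝ) := (le_max_left _ _).trans_lt hq1
  have hqrδ : r - δ < (q:ℝ) := (le_max_right _ _).trans_lt hq1
  refine ⟨q, hq0, hq2, ?_⟩
  have hyq : y ∈ Metric.ball x (q:ℝ) := mem_ball.mpr hqy
  -- lower bound: varBall f x q > varBall f x r - ε/2
  have hlow : varBall f x r - ε/2 < varBall f x (q:ℝ) := by
    have h1 : |f y - f x| / r ≤ |f y - f x| / (q:ℝ) :=
      div_le_div_of_nonneg_left (abs_nonneg _) hq0 hq2.le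
    have h2 : |f y - f x| / (q:ℝ) ≤ varBall f x (q:ℝ) := le_varBall hK x y hyq
    linarith
  -- upper bound
  have hup : varBall f x (q:ℝ) ≤ varBall f x r + ε := by
    have h1 := varBall_le_mul hK x hq0 hq2.le
    have h2 : (r / (q:ℝ)) * varBall f x r ≤ varBall f x r + ε := by
      rw [div_mul_eq_mul_div, div_le_iff₀ hq0]
      have hq3 : r/2 ≤ (q:ℝ) := by linarith
      have h4 : (r - (q:ℝ)) * varBall f x r ≤ δ * K' := by
        apply mul_le_mul (by linarith) hgK hg0 hδ0.le
      have h5 : δ * K' ≤ ε * r / 8 := by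
        rw [hδdef]
        calc min (r/2) (ε * r / (8*K')) * K' ≤ (ε * r / (8*K')) * K' :=
              mul_le_mul_of_nonneg_right (min_le_right _ _) hK0.le
          _ = ε * r / 8 := by field_simp
      have h6 : ε * r / 2 ≤ ε * (q:ℝ) := by
        calc ε * r / 2 = ε * (r/2) := by ring
          _ ≤ ε * (q:ℝ) := mul_le_mul_of_nonneg_left hq3 hε.le
      nlinarith
    linarith
  rw [abs_le]
  constructor <;> linarith

end Aux

section Aux2
variable {X : Type*} [MetricSpace X] {f : X → ℝ} {K : ℝ≥0} (hK : LipschitzWith K f)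

include hK in
lemma varBall_lsc {r : ℝ} (hr : 0 < r) :
    LowerSemicontinuous (fun x => varBall f x r) := by
  intro x t ht
  obtain ⟨a, ⟨y, hy, rfl⟩, hta⟩ := exists_lt_of_lt_csSup (varSet_nonempty x hr) ht
  have h1 : ∀ᶠ x' in nhds x, dist y x' < r := by
    have hopen : IsOpen {x' : X | dist y x' < r} :=
      isOpen_lt (continuous_const.dist continuous_id) continuous_const
    exact eventually_of_mem (hopen.mem_nhds (mem_ball.mp hy)) fun _ h => h
  have h2 : ∀ᶠ x' in nhds x, t < |f y - f x'| / r := by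
    have hopen : IsOpen {x' : X | t < |f y - f x'| / r} :=
      isOpen_lt continuous_const
        (((continuous_const.sub hK.continuous).abs).div_const r)
    exact eventually_of_mem (hopen.mem_nhds hta) fun _ h => h
  filter_upwards [h1, h2] with x' hx1 hx2
  exact hx2.trans_le (le_varBall hK x' y (mem_ball.mpr hx1))

variable [MeasurableSpace X] [BorelSpace X]

include hK in
lemma varBall_measurable {r : ℝ} (hr : 0 < r) :
    Measurable (fun x => varBall f x r) :=
  (varBall_lsc hK hr).measurable

end Aux2

section Formulas
variable {X : Type*} [MetricSpace X] {f : X → ℝ} {K : ℝ≥0} (hK : LipschitzWith K f)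

/-- The index type of rational radii in `(0, 1/(n+1))`. -/
def ratIdx (n : ℕ) : Type := {q : ℚ // 0 < (q:ℝ) ∧ (q:ℝ) < 1/(n+1)}

instance (n : ℕ) : Countable (ratIdx n) := by unfold ratIdx; infer_instance

lemma one_div_pos_nat (n : ℕ) : (0:ℝ) < 1/(n+1) := by positivity

instance (n : ℕ) : Nonempty (ratIdx n) := by
  obtain ⟨q, hq1, hq2⟩ := exists_rat_btwn (one_div_pos_nat n)
  exact ⟨⟨q, hq1, hq2⟩⟩

include hK in
lemma ratIdx_bddBelow (x : X) (n : ℕ) :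
    BddBelow (Set.range fun q : ratIdx n => varBall f x (q.1:ℝ)) := by
  refine ⟨0, ?_⟩
  rintro a ⟨q, rfl⟩
  exact varBall_nonneg hK x q.2.1

include hK in
lemma ratIdx_bddAbove (x : X) (n : ℕ) :
    BddAbove (Set.range fun q : ratIdx n => varBall f x (q.1:ℝ)) := by
  refine ⟨K, ?_⟩
  rintro a ⟨q, rfl⟩
  exact varBall_le_K hK x q.2.1

include hK in
lemma varBall_eventually_nonneg (x : X) :
    ∀ᶠ r in nhdsWithin 0 (Set.Ioi (0:ℝ)), 0 ≤ varBall f x r :=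
  eventually_of_mem self_mem_nhdsWithin fun r hr => varBall_nonneg hK x hr

include hK in
lemma varBall_eventually_le (x : X) :
    ∀ᶠ r in nhdsWithin 0 (Set.Ioi (0:ℝ)), varBall f x r ≤ K :=
  eventually_of_mem self_mem_nhdsWithin fun r hr => varBall_le_K hK x hr

include hK in
lemma liminf_formula (x : X) :
    Filter.liminf (fun r => varBall f x r) (nhdsWithin 0 (Set.Ioi (0:ℝ)))
      = ⨆ n : ℕ, ⨅ q : ratIdx n, varBall f x (q.1:ℝ) := by
  have hbdd : ∀ n, _ := ratIdx_bddBelow hK x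
  have hco : Filter.IsCoboundedUnder (· ≥ ·) (nhdsWithin 0 (Set.Ioi (0:ℝ)))
      (fun r => varBall f x r) :=
    Filter.IsBoundedUnder.isCoboundedUnder_ge ⟨K, varBall_eventually_le hK x⟩
  have hbd : Filter.IsBoundedUnder (· ≥ ·) (nhdsWithin 0 (Set.Ioi (0:ℝ)))
      (fun r => varBall f x r) := ⟨0, varBall_eventually_nonneg hK x⟩
  have hSupBdd : BddAbove (Set.range fun n : ℕ => ⨅ q : ratIdx n, varBall f x (q.1:ℝ)) := by
    refine ⟨K, ?_⟩
    rintro a ⟨n, rfl⟩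
    obtain ⟨q⟩ := (inferInstance : Nonempty (ratIdx n))
    exact (ciInf_le (hbdd n) q).trans (varBall_le_K hK x q.2.1)
  apply le_antisymm
  · -- liminf ≤ sup inf
    apply le_of_forall_pos_le_add
    intro ε hε
    apply Filter.liminf_le_of_frequently_le _ hbd
    rw [Filter.frequently_iff]
    intro U hU
    obtain ⟨u, hu, hsub⟩ := mem_nhdsGT_iff_exists_Ioo_subset.mp hU
    obtain ⟨n, hn⟩ := exists_nat_one_div_lt (Set.mem_Ioi.mp hu)
    have hlt : (⨅ q : ratIdx n, varBall f x (q.1:ℝ))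
        < (⨅ q : ratIdx n, varBall f x (q.1:ℝ)) + ε := by linarith
    obtain ⟨q, hq⟩ := exists_lt_of_ciInf_lt hlt
    refine ⟨(q.1:ℝ), hsub ⟨q.2.1, lt_trans q.2.2 hn⟩, ?_⟩
    have h2 : (⨅ q : ratIdx n, varBall f x (q.1:ℝ))
        ≤ ⨆ n : ℕ, ⨅ q : ratIdx n, varBall f x (q.1:ℝ) := le_ciSup hSupBdd n
    linarith
  · -- sup inf ≤ liminf
    apply ciSup_le
    intro n
    apply le_of_forall_pos_le_add
    intro ε hε
    have hev : ∀ᶠ s in nhdsWithin 0 (Set.Ioi (0:ℝ)),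
        (⨅ q : ratIdx n, varBall f x (q.1:ℝ)) - ε ≤ varBall f x s := by
      have hmem : Set.Ioo (0:ℝ) (1/(n+1)) ∈ nhdsWithin 0 (Set.Ioi (0:ℝ)) :=
        Ioo_mem_nhdsGT_of_mem ⟨le_refl _, one_div_pos_nat n⟩
      refine eventually_of_mem hmem fun s hs => ?_
      obtain ⟨q, hq0, hqs, hqd⟩ := varBall_approx hK x hs.1 hε
      have hqn : (q:ℝ) < 1/(n+1) := hqs.trans hs.2
      have h1 : (⨅ q : ratIdx n, varBall f x (q.1:ℝ)) ≤ varBall f x (q:ℝ) :=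
        ciInf_le (hbdd n) ⟨q, hq0, hqn⟩
      have h2 : varBall f x (q:ℝ) - varBall f x s ≤ ε := (abs_le.mp hqd).2
      linarith
    have := Filter.le_liminf_of_le hco hev
    linarith


include hK in
lemma limsup_formula (x : X) :
    Filter.limsup (fun r => varBall f x r) (nhdsWithin 0 (Set.Ioi (0:ℝ)))
      = ⨅ n : ℕ, ⨆ q : ratIdx n, varBall f x (q.1:ℝ) := by
  have hbddA : ∀ n, _ := ratIdx_bddAbove hK x
  have hco : Filter.IsCoboundedUnder (· ≤ ·) (nhdsWithin 0 (Set.Ioi (0:ℝ)))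
      (fun r => varBall f x r) :=
    Filter.IsBoundedUnder.isCoboundedUnder_le ⟨0, varBall_eventually_nonneg hK x⟩
  have hbd : Filter.IsBoundedUnder (· ≤ ·) (nhdsWithin 0 (Set.Ioi (0:ℝ)))
      (fun r => varBall f x r) := ⟨K, varBall_eventually_le hK x⟩
  have hInfBdd : BddBelow (Set.range fun n : ℕ => ⨆ q : ratIdx n, varBall f x (q.1:ℝ)) := by
    refine ⟨0, ?_⟩
    rintro a ⟨n, rfl⟩
    obtain ⟨q⟩ := (inferInstance : Nonempty (ratIdx n))
    exact (varBall_nonneg hK x q.2.1).trans (le_ciSup (hbddA n) q)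
  apply le_antisymm
  · -- limsup ≤ inf sup
    apply le_ciInf
    intro n
    apply le_of_forall_pos_le_add
    intro ε hε
    have hev : ∀ᶠ s in nhdsWithin 0 (Set.Ioi (0:ℝ)),
        varBall f x s ≤ (⨆ q : ratIdx n, varBall f x (q.1:ℝ)) + ε := by
      have hmem : Set.Ioo (0:ℝ) (1/(n+1)) ∈ nhdsWithin 0 (Set.Ioi (0:ℝ)) :=
        Ioo_mem_nhdsGT_of_mem ⟨le_refl _, one_div_pos_nat n⟩
      refine eventually_of_mem hmem fun s hs => ?_
      obtain ⟨q, hq0, hqs, hqd⟩ := varBall_approx hK x hs.1 hε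
      have hqn : (q:ℝ) < 1/(n+1) := hqs.trans hs.2
      have h1 : varBall f x (q:ℝ) ≤ ⨆ q : ratIdx n, varBall f x (q.1:ℝ) :=
        le_ciSup (hbddA n) ⟨q, hq0, hqn⟩
      have h2 : varBall f x s - varBall f x (q:ℝ) ≤ ε := by
        have := (abs_le.mp hqd).1; linarith
      linarith
    exact Filter.limsup_le_of_le hco hev
  · -- inf sup ≤ limsup
    apply le_of_forall_pos_le_add
    intro ε hε
    have hfreq : ∃ᶠ s in nhdsWithin 0 (Set.Ioi (0:ℝ)),
        (⨅ n : ℕ, ⨆ q : ratIdx n, varBall f x (q.1:ℝ)) - ε ≤ varBall f x s := by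
      rw [Filter.frequently_iff]
      intro U hU
      obtain ⟨u, hu, hsub⟩ := mem_nhdsGT_iff_exists_Ioo_subset.mp hU
      obtain ⟨n, hn⟩ := exists_nat_one_div_lt (Set.mem_Ioi.mp hu)
      have hlt : (⨆ q : ratIdx n, varBall f x (q.1:ℝ)) - ε
          < ⨆ q : ratIdx n, varBall f x (q.1:ℝ) := by linarith
      obtain ⟨q, hq⟩ := exists_lt_of_lt_ciSup hlt
      refine ⟨(q.1:ℝ), hsub ⟨q.2.1, lt_trans q.2.2 hn⟩, ?_⟩
      have h2 : (⨅ n : ℕ, ⨆ q : ratIdx n, varBall f x (q.1:ℝ))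
          ≤ ⨆ q : ratIdx n, varBall f x (q.1:ℝ) := ciInf_le hInfBdd n
      linarith
    have := Filter.le_limsup_of_frequently_le hfreq hbd
    linarith

end Formulas

theorem lipLow_lipUp_measurable'
    (X : Type*) [MetricSpace X] [MeasurableSpace X] [BorelSpace X]
    (f : X → ℝ) (hf : ∃ K : ℝ≥0, LipschitzWith K f) :
    Measurable (fun x => Filter.liminf (fun r => varBall f x r) (nhdsWithin 0 (Set.Ioi (0:ℝ)))) ∧
    Measurable (fun x => Filter.limsup (fun r => varBall f x r) (nhdsWithin 0 (Set.Ioi (0:ℝ)))) := by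
  obtain ⟨K, hK⟩ := hf
  have hm : ∀ (n : ℕ) (q : ratIdx n), Measurable (fun x => varBall f x (q.1:ℝ)) :=
    fun n q => varBall_measurable hK q.2.1
  constructor
  · have : (fun x => Filter.liminf (fun r => varBall f x r) (nhdsWithin 0 (Set.Ioi (0:ℝ))))
        = fun x => ⨆ n : ℕ, ⨅ q : ratIdx n, varBall f x (q.1:ℝ) := by
      funext x; exact liminf_formula hK x
    rw [this]
    exact Measurable.iSup fun n => Measurable.iInf fun q => hm n q
  · have : (fun x => Filter.limsup (fun r => varBall f x r) (nhdsWithin 0 (Set.Ioi (0:ℝ))))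
        = fun x => ⨅ n : ℕ, ⨆ q : ratIdx n, varBall f x (q.1:ℝ) := by
      funext x; exact limsup_formula hK x
    rw [this]
    exact Measurable.iInf fun n => Measurable.iSup fun q => hm n q


/-- Lemma 3.1: for a Lipschitz function `f`, the pointwise Lipschitz
constants `x ↦ lip_x f` and `x ↦ Lip_x f` are Borel measurable. -/
theorem lipLow_lipUp_measurable
    (X : Type*) [MetricSpace X] [MeasurableSpace X] [BorelSpace X]
    (f : X → ℝ) (hf : IsLip f) :
    Measurable (fun x => lipLow f x) ∧ Measurable (fun x => lipUp f x) :=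
  lipLow_lipUp_measurable' X f hf
end
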